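/- If L ⊆ binom(X,2) is an edge-weight lasso for an X-tree T = (V,E), then |L| ≥ |E|; and if, moreover, L is a minimal edge-weight lasso for T (i.e. no proper subset of L is an edge-weight lasso for T), then |L| = |E|. -/

import Mathlib

/- Common definitions for formalizing results of Dress, Huber & Steel,
   "Lassoing a phylogenetic tree I: Basic properties, shellings, and covers".

   Trees are modelled as simple graphs on an ambient vertex type `U`;
   the vertex set of the tree is the support of the graph (every vertex of a
   tree with at least two vertices has degree >= 1). -/

noncomputable section
open scoped Classical

namespace Lasso

variable {U : Type}

/-- The degree of a vertex. -/
def deg (G : SimpleGraph U) (v : U) : ℕ := (G.neighborSet v).ncard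

/-- A leaf is a vertex of degree `1`. -/
def IsLeaf (G : SimpleGraph U) (v : U) : Prop := deg G v = 1

/-- An interior vertex: a non-leaf vertex of the tree. -/
def Interior (G : SimpleGraph U) (v : U) : Prop := v ∈ G.support ∧ ¬ IsLeaf G v

/-- `G` is an `X`-tree: a finite tree without vertices of degree two whose
    leaf set is exactly `X`. -/
structure IsXTree (X : Set U) (G : SimpleGraph U) : Prop where
  support_finite : G.support.Finite
  support_nonempty : G.support.Nonempty
  connected : ∀ a ∈ G.support, ∀ b ∈ G.support, G.Reachable a b
  acyclic : G.IsAcyclic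
  no_deg_two : ∀ v : U, deg G v ≠ 2
  leaves_eq : X = {v : U | IsLeaf G v}

/-- An edge weighting of `G`: nonnegative, and zero away from the edges of `G`
    (so that it represents an element of `ℝ_{≥0}^E`). -/
structure IsWeighting (G : SimpleGraph U) (ω : Sym2 U → ℝ) : Prop where
  nonneg : ∀ e, 0 ≤ ω e
  zero_off : ∀ e, e ∉ G.edgeSet → ω e = 0

/-- A proper edge weighting: in addition strictly positive on interior edges
    (edges both of whose endpoints are non-leaves). -/
structure IsProperWeighting (G : SimpleGraph U) (ω : Sym2 U → ℝ)
    extends IsWeighting G ω : Prop where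
  interior_pos : ∀ e ∈ G.edgeSet, (∀ u ∈ e, ¬ IsLeaf G u) → 0 < ω e

/-- The set `E_T(x|y)` of edges separating `x` from `y`, i.e. the edges lying
    on every walk from `x` to `y` (in a tree: the edges of the path). -/
def pathEdges (G : SimpleGraph U) (x y : U) : Set (Sym2 U) :=
  {e | e ∈ G.edgeSet ∧ ∀ p : G.Walk x y, e ∈ p.edges}

/-- The induced distance `D_ω(x,y)`. -/
def tdist (G : SimpleGraph U) (ω : Sym2 U → ℝ) (x y : U) : ℝ :=
  ∑ᶠ e ∈ pathEdges G x y, ω e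

/-- Path edge set of an unordered pair. -/
def pairPathEdges (G : SimpleGraph U) (c : Sym2 U) : Set (Sym2 U) :=
  {e | e ∈ G.edgeSet ∧ ∀ x y : U, c = s(x, y) → ∀ p : G.Walk x y, e ∈ p.edges}

/-- `D_ω` on an unordered pair (a cord); `λ^T_c(ω)`. -/
def pdist (G : SimpleGraph U) (ω : Sym2 U → ℝ) (c : Sym2 U) : ℝ :=
  ∑ᶠ e ∈ pairPathEdges G c, ω e

/-- `(G,ω)` and `(G',ω')` are `L`-isometric. -/
def LIso (L : Set (Sym2 U)) (G : SimpleGraph U) (ω : Sym2 U → ℝ)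
    (G' : SimpleGraph U) (ω' : Sym2 U → ℝ) : Prop :=
  ∀ x y : U, s(x, y) ∈ L → tdist G ω x y = tdist G' ω' x y

/-- `L` is a set of cords of `X`: 2-element subsets of `X`. -/
def IsCordSet (X : Set U) (L : Set (Sym2 U)) : Prop :=
  ∀ c ∈ L, ¬ c.IsDiag ∧ ∀ u ∈ c, u ∈ X

/-- The union of all cords in `L`. -/
def cup (L : Set (Sym2 U)) : Set U := {v | ∃ c ∈ L, v ∈ c}

/-- `L` is an edge-weight lasso for `G`. -/
def EdgeWeightLasso (G : SimpleGraph U) (L : Set (Sym2 U)) : Prop :=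
  ∀ ω ω' : Sym2 U → ℝ, IsProperWeighting G ω → IsProperWeighting G ω' →
    LIso L G ω G ω' → ω = ω'

/-- `G ≃ G'` via a graph isomorphism fixing `X` pointwise. -/
def FixingIso (X : Set U) (G G' : SimpleGraph U) : Prop :=
  ∃ φ : G ≃g G', ∀ x ∈ X, φ x = x

/-- `(G,ω)` and `(G',ω')` are isometric: a graph isomorphism fixing `X`
    pointwise and preserving edge weights. -/
def FixingIsometry (X : Set U) (G G' : SimpleGraph U) (ω ω' : Sym2 U → ℝ) : Prop :=
  ∃ φ : G ≃g G', (∀ x ∈ X, φ x = x) ∧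
    ∀ e ∈ G.edgeSet, ω' (Sym2.map (fun u => φ u) e) = ω e

/-- `L` is a topological lasso for the `X`-tree `G`. -/
def TopologicalLasso (X : Set U) (G : SimpleGraph U) (L : Set (Sym2 U)) : Prop :=
  ∀ G' : SimpleGraph U, IsXTree X G' →
    ∀ ω ω' : Sym2 U → ℝ, IsProperWeighting G ω → IsProperWeighting G' ω' →
      LIso L G ω G' ω' → FixingIso X G G'

/-- `L` is a strong lasso for the `X`-tree `G`. -/
def StrongLasso (X : Set U) (G : SimpleGraph U) (L : Set (Sym2 U)) : Prop :=
  ∀ G' : SimpleGraph U, IsXTree X G' →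
    ∀ ω ω' : Sym2 U → ℝ, IsProperWeighting G ω → IsProperWeighting G' ω' →
      LIso L G ω G' ω' → FixingIsometry X G G' ω ω'

/-- `G` displays the quartet `a a' ‖ b b'`: some edge lies on all four paths
    joining `a` or `a'` to `b` or `b'`. -/
def DisplaysQ (G : SimpleGraph U) (a a' b b' : U) : Prop :=
  ∃ e : Sym2 U, e ∈ pathEdges G a b ∧ e ∈ pathEdges G a b' ∧
    e ∈ pathEdges G a' b ∧ e ∈ pathEdges G a' b'

def Distinct4 (a b c d : U) : Prop :=
  a ≠ b ∧ a ≠ c ∧ a ≠ d ∧ b ≠ c ∧ b ≠ d ∧ c ≠ d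

/-- `a a' ‖ b b' ∈ Q(G)`: a quartet on four distinct elements of `X`
    displayed by `G`. -/
def QuartetOf (X : Set U) (G : SimpleGraph U) (a a' b b' : U) : Prop :=
  a ∈ X ∧ a' ∈ X ∧ b ∈ X ∧ b' ∈ X ∧ Distinct4 a a' b b' ∧ DisplaysQ G a a' b b'

/-- `G` displays `a a' | b b'`: it displays neither `a b ‖ a' b'` nor
    `a b' ‖ a' b`. -/
def DisplaysBar (G : SimpleGraph U) (a a' b b' : U) : Prop :=
  ¬ DisplaysQ G a b a' b' ∧ ¬ DisplaysQ G a b' a' b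

/-- `A, B` is a virtual `T`-split of `X`. -/
def VirtualSplit (X : Set U) (G : SimpleGraph U) (A B : Set U) : Prop :=
  A.Nonempty ∧ B.Nonempty ∧ Disjoint A B ∧ A ∪ B = X ∧
    ∀ a ∈ A, ∀ a' ∈ A, ∀ b ∈ B, ∀ b' ∈ B, a ≠ a' → b ≠ b' → DisplaysBar G a a' b b'

/-- `G ≤ G'` (`G'` refines `G`), via the standard characterization
    `Q(T) ⊆ Q(T')` of refinement of `X`-trees. -/
def Refines (X : Set U) (G G' : SimpleGraph U) : Prop :=
  ∀ a a' b b' : U, QuartetOf X G a a' b b' → QuartetOf X G' a a' b b'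

/-- `L` is a weak lasso for (coralls) the `X`-tree `G`. -/
def WeakLasso (X : Set U) (G : SimpleGraph U) (L : Set (Sym2 U)) : Prop :=
  ∀ G' : SimpleGraph U, IsXTree X G' →
    ∀ ω ω' : Sym2 U → ℝ, IsProperWeighting G ω → IsProperWeighting G' ω' →
      LIso L G ω G' ω' → Refines X G G'

/-- The subgraph induced on a vertex set `A`. -/
def restrict {α : Type*} (Γ : SimpleGraph α) (A : Set α) : SimpleGraph α where
  Adj u v := Γ.Adj u v ∧ u ∈ A ∧ v ∈ A
  symm := ⟨by rintro u v ⟨h, hu, hv⟩; exact ⟨h.symm, hv, hu⟩⟩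
  loopless := ⟨by rintro v ⟨h, _, _⟩; exact Γ.ne_of_adj h rfl⟩

/-- The restriction of `Γ` to `A` is a connected graph. -/
def ConnectedOn {α : Type*} (Γ : SimpleGraph α) (A : Set α) : Prop :=
  ∀ x ∈ A, ∀ y ∈ A, (restrict Γ A).Reachable x y

/-- The connected component of `x` in `Γ` is bipartite. -/
def ComponentBipartite {α : Type*} (Γ : SimpleGraph α) (x : α) : Prop :=
  ∃ f : α → Bool, ∀ u v : α, Γ.Reachable x u → Γ.Adj u v → f u ≠ f v

/-- No connected component (of the graph with vertex set `S`) is bipartite. -/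
def StronglyNonBipartite {α : Type*} (Γ : SimpleGraph α) (S : Set α) : Prop :=
  ∀ x ∈ S, ¬ ComponentBipartite Γ x

/-- The graph `Γ` is bipartite. -/
def Bipartite {α : Type*} (Γ : SimpleGraph α) : Prop :=
  ∃ f : α → Bool, ∀ u v : α, Γ.Adj u v → f u ≠ f v

/-- `E_v`: the set of edges of `G` containing `v`. -/
def Ev (G : SimpleGraph U) (v : U) : Set (Sym2 U) := {e | e ∈ G.edgeSet ∧ v ∈ e}

/-- The graph `G(L,v)` on the edge set `E_v`: two distinct edges at `v` are
    adjacent if some cord of `L` has both on its path. -/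
def covGraph (G : SimpleGraph U) (L : Set (Sym2 U)) (v : U) : SimpleGraph (Sym2 U) where
  Adj e e' := e ≠ e' ∧ e ∈ Ev G v ∧ e' ∈ Ev G v ∧
    ∃ x y : U, s(x, y) ∈ L ∧ e ∈ pathEdges G x y ∧ e' ∈ pathEdges G x y
  symm := ⟨by
    rintro e e' ⟨hne, he, he', x, y, hc, hp, hp'⟩
    exact ⟨hne.symm, he', he, x, y, hc, hp', hp⟩⟩
  loopless := ⟨by rintro e ⟨hne, _⟩; exact hne rfl⟩

/-- `G(L,v)` is the complete graph on `E_v`. -/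
def CompleteAt (G : SimpleGraph U) (L : Set (Sym2 U)) (v : U) : Prop :=
  ∀ e ∈ Ev G v, ∀ e' ∈ Ev G v, e ≠ e' → (covGraph G L v).Adj e e'

/-- `L` is a `t`-cover of `G`. -/
def TCover (X : Set U) (G : SimpleGraph U) (L : Set (Sym2 U)) : Prop :=
  cup L = X ∧ ∀ v : U, Interior G v → CompleteAt G L v

/-- The graph `Γ(L, c)` for the cord `c = x x'`, with vertex set `X − {x,x'}`
    and edge set `L^(c)`. -/
def cordGraphC (X : Set U) (G : SimpleGraph U) (L : Set (Sym2 U)) (x x' : U) :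
    SimpleGraph U where
  Adj y y' := y ≠ y' ∧ y ≠ x ∧ y ≠ x' ∧ y' ≠ x ∧ y' ≠ x' ∧
    s(y, y') ∈ L ∧ QuartetOf X G x x' y y' ∧
    ((s(x, y) ∈ L ∧ s(x', y') ∈ L) ∨ (s(x, y') ∈ L ∧ s(x', y) ∈ L))
  symm := ⟨by
    rintro y y' ⟨hne, h1, h2, h3, h4, hL,
      ⟨hx1, hx2, hy1, hy2, ⟨d1, d2, d3, d4, d5, d6⟩, e, p1, p2, p3, p4⟩, hor⟩
    exact ⟨hne.symm, h3, h4, h1, h2, by rwa [Sym2.eq_swap],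
      ⟨hx1, hx2, hy2, hy1, ⟨d1, d3, d2, d5, d4, d6.symm⟩, e, p2, p1, p4, p3⟩, hor.symm⟩⟩
  loopless := ⟨by rintro y ⟨hne, _⟩; exact hne rfl⟩

/-- `v` lies on the path of `G` from `x` to `y`. -/
def OnPath (G : SimpleGraph U) (x y v : U) : Prop :=
  v = x ∨ v = y ∨ ∃ e ∈ pathEdges G x y, v ∈ e

/-- `v = med_G(a,b,c)`: `v` lies on all three pairwise paths. -/
def IsMedian (G : SimpleGraph U) (a b c v : U) : Prop :=
  OnPath G a b v ∧ OnPath G a c v ∧ OnPath G b c v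

/-- `L` is a triplet cover of `G`. -/
def TripletCover (X : Set U) (G : SimpleGraph U) (L : Set (Sym2 U)) : Prop :=
  ∀ v : U, Interior G v → ∃ a b c : U, a ∈ X ∧ b ∈ X ∧ c ∈ X ∧
    a ≠ b ∧ a ≠ c ∧ b ≠ c ∧
    s(a, b) ∈ L ∧ s(a, c) ∈ L ∧ s(b, c) ∈ L ∧ IsMedian G a b c v

/-- `L` is a pointed `x`-cover of `G`. -/
def PointedCover (X : Set U) (G : SimpleGraph U) (L : Set (Sym2 U)) (x : U) : Prop :=
  cup L = X ∧ (∀ v : U, Interior G v → CompleteAt G L v) ∧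
    ∀ v : U, Interior G v → ∃ a b : U, a ≠ b ∧
      s(a, x) ∈ L ∧ s(b, x) ∈ L ∧ IsMedian G a b x v

/-- Every interior vertex has degree `3`. -/
def IsBinary (G : SimpleGraph U) : Prop := ∀ v : U, Interior G v → deg G v = 3

/-- `a, b` form a `T`-cherry with common neighbour `v`. -/
def IsCherry (G : SimpleGraph U) (a b v : U) : Prop :=
  a ≠ b ∧ IsLeaf G a ∧ IsLeaf G b ∧ G.Adj a v ∧ G.Adj b v

/-- `a, b` form a proper `T`-cherry with common neighbour `v` of degree `3`. -/
def IsProperCherry (G : SimpleGraph U) (a b v : U) : Prop :=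
  IsCherry G a b v ∧ deg G v = 3

/-- `W` is a `T`-core of `G`. -/
def IsCore (G : SimpleGraph U) (W : Set U) : Prop :=
  W.Nonempty ∧ W ⊆ G.support ∧
    (∀ a ∈ W, ∀ b ∈ W, (restrict G W).Reachable a b) ∧
    ∀ v ∈ W, deg (restrict G W) v = 1 ∨ deg (restrict G W) v = deg G v

/-- `X_W`: the leaf set of the induced tree `T_W`. -/
def coreLeaves (G : SimpleGraph U) (W : Set U) : Set U :=
  {v | v ∈ W ∧ deg (restrict G W) v = 1}

/-- `g` is the gate of `x` in `W`: the vertex of `W` closest to `x`. -/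
def IsGate (G : SimpleGraph U) (W : Set U) (x g : U) : Prop :=
  g ∈ W ∧ ∀ w ∈ W, OnPath G x w g

/-- `L_W`: the cords induced on the gates. -/
def gateCords (G : SimpleGraph U) (W : Set U) (L : Set (Sym2 U)) : Set (Sym2 U) :=
  {c | ∃ p q y y' : U, s(p, q) ∈ L ∧ IsGate G W p y ∧ IsGate G W q y' ∧
       y ≠ y' ∧ c = s(y, y')}

/-- The gate map of the cherry reduction: `a, b ↦ v`, all else fixed. -/
def cherryMap (a b v : U) : U → U := fun p => if p = a ∨ p = b then v else p

/-- `L_U` for the cherry reduction at the proper cherry `a,b` with neighbour `v`. -/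
def cherryLU (L : Set (Sym2 U)) (a b v : U) : Set (Sym2 U) :=
  {c | ∃ p q : U, s(p, q) ∈ L ∧ cherryMap a b v p ≠ cherryMap a b v q ∧
       c = s(cherryMap a b v p, cherryMap a b v q)}

/-- `X(a, L^{ab}) = {y : ay ∈ L − {ab}}`. -/
def sideSet (L : Set (Sym2 U)) (a b : U) : Set U :=
  {y | s(a, y) ∈ L ∧ s(a, y) ≠ s(a, b)}

/-- `Σ_{c ∈ LU} ρ(c)·λ^{TU}_c = 0` as a linear form on `ℝ^{E_U}`. -/
def RhoAnnihilates (TU : SimpleGraph U) (LU : Set (Sym2 U)) (ρ : Sym2 U → ℝ) : Prop :=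
  ∀ η : Sym2 U → ℝ, (∀ e, e ∉ TU.edgeSet → η e = 0) →
    ∑ᶠ c ∈ LU, ρ c * pdist TU η c = 0

/-- `D_ω(ab|cd)`. -/
def Dq (G : SimpleGraph U) (ω : Sym2 U → ℝ) (a b c d : U) : ℝ :=
  max (tdist G ω a c + tdist G ω b d) (tdist G ω a d + tdist G ω b c)
    - tdist G ω a b - tdist G ω c d

/-- The star tree on `X` with central vertex `z`. -/
def starGraph (X : Set U) (z : U) : SimpleGraph U :=
  SimpleGraph.fromEdgeSet {c | ∃ x ∈ X, c = s(x, z)}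

/-- `A ∨ B`: all cords with one end in `A` and the other in `B`. -/
def vee (A B : Set U) : Set (Sym2 U) := {c | ∃ a ∈ A, ∃ b ∈ B, c = s(a, b)}

/-- A `T`-shelling of `binom(X,2) − L` with cords `aᵢbᵢ` and pivots `pᵢ, qᵢ`. -/
def IsShelling (X : Set U) (G : SimpleGraph U) (L : Set (Sym2 U)) (m : ℕ)
    (a b p q : Fin m → U) : Prop :=
  (∀ i, a i ∈ X ∧ b i ∈ X ∧ a i ≠ b i ∧ s(a i, b i) ∉ L) ∧
  Function.Injective (fun i => s(a i, b i)) ∧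
  (∀ x y : U, x ∈ X → y ∈ X → x ≠ y → s(x, y) ∉ L → ∃ i, s(x, y) = s(a i, b i)) ∧
  ∀ i : Fin m,
    p i ∈ X ∧ q i ∈ X ∧ p i ≠ q i ∧
    p i ≠ a i ∧ p i ≠ b i ∧ q i ≠ a i ∧ q i ≠ b i ∧
    DisplaysQ G (a i) (p i) (b i) (q i) ∧
    ∀ u w : U, u ∈ ({a i, b i, p i, q i} : Set U) → w ∈ ({a i, b i, p i, q i} : Set U) →
      u ≠ w → s(u, w) ≠ s(a i, b i) →
      (s(u, w) ∈ L ∨ ∃ j : Fin m, j < i ∧ s(u, w) = s(a j, b j))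

/-- `L` is an `s`-lasso for `G`. -/
def SLasso (X : Set U) (G : SimpleGraph U) (L : Set (Sym2 U)) : Prop :=
  cup L = X ∧ ∃ (m : ℕ) (a b p q : Fin m → U), IsShelling X G L m a b p q

/-- `L'_{A,B}` of Corollary 3 (the cherry construction). -/
def LAB (L' : Set (Sym2 U)) (X : Set U) (a b : U) (A B : Set U) : Set (Sym2 U) :=
  {c | c ∈ L' ∧ ∀ u ∈ c, u ∈ X ∧ u ≠ a ∧ u ≠ b} ∪
  {c | ∃ x ∈ A ∪ {b}, c = s(a, x)} ∪
  {c | ∃ x ∈ B, c = s(b, x)}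

end Lasso

/-! Cord lengths `λ_c(ω) = D_ω(c)` are linear functionals of the edge weighting
`ω ∈ ℝ^E`, and the proper weightings contain an open subset of `ℝ^E`. Hence `L` is an
edge-weight lasso exactly when the functionals `λ_c`, `c ∈ L`, have no common nonzero kernel
vector, i.e. span the dual of `ℝ^E`. A spanning family has at least `|E|` members and contains
a basis of exactly `|E|` members, which is again a lasso; a minimal lasso must therefore be
that basis. -/

lemma Set.Finite.sym2 {α : Type*} {s : Set α} (hs : s.Finite) : s.sym2.Finite := by
  rw [Set.sym2_eq_mk_image]
  exact (hs.prod hs).image _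

section DualSpan

open Module Submodule

theorem span_image_eq_top_iff_forall_apply_eq_zero {K V ι : Type*} [Field K] [AddCommGroup V]
    [Module K V] [FiniteDimensional K V] (f : ι → Dual K V) (s : Set ι) :
    span K (f '' s) = ⊤ ↔ ∀ v, (∀ i ∈ s, f i v = 0) → v = 0 := by
  have hcoann : (span K (f '' s)).dualCoannihilator = ⊥ ↔
      ∀ v, (∀ i ∈ s, f i v = 0) → v = 0 := by
    simp [← SetLike.coe_set_eq, coe_dualCoannihilator_span, Set.eq_singleton_iff_unique_mem]
  rw [← hcoann]
  constructor
  · intro h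
    rw [h, dualCoannihilator_top]
  · intro h
    rw [← Subspace.dualCoannihilator_dualAnnihilator_eq (W := span K (f '' s)), h,
      dualAnnihilator_bot]

theorem exists_subset_span_image_eq_top_ncard_eq_finrank {K V ι : Type*} [DivisionRing K]
    [AddCommGroup V] [Module K V] (f : ι → V) (s : Set ι)
    (h : span K (f '' s) = ⊤) :
    ∃ t ⊆ s, span K (f '' t) = ⊤ ∧ t.ncard = finrank K V := by
  obtain ⟨b, hbs, hspan, hli⟩ := exists_linearIndependent K (f '' s)
  obtain ⟨t, hts, hbij⟩ := Set.exists_subset_bijOn (s ∩ f ⁻¹' b) f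
  rw [Set.image_inter_preimage, Set.inter_eq_right.2 hbs] at hbij
  let basis : Basis b K V := .mk hli (by rw [Subtype.range_coe, hspan, h])
  refine ⟨t, hts.trans Set.inter_subset_left, by rw [hbij.image_eq, hspan, h], ?_⟩
  rw [finrank_eq_nat_card_basis basis, Nat.card_coe_set_eq, ← hbij.image_eq,
    hbij.injOn.ncard_image]

end DualSpan

namespace Lasso

variable {U : Type} {G : SimpleGraph U}

lemma IsXTree.finite_edgeSet {X : Set U} (hT : IsXTree X G) :
    G.edgeSet.Finite :=
  hT.support_finite.sym2.subset (SimpleGraph.edgeSet_subset_sym2_iff.2 subset_rfl)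

lemma IsCordSet.finite {X : Set U} {L : Set (Sym2 U)} (hX : X.Finite)
    (hL : IsCordSet X L) : L.Finite :=
  hX.sym2.subset fun c hc => Set.mem_sym2_iff_subset.2 fun u hu => (hL c hc).2 u hu

variable (G) in
lemma pathEdges_comm (x y : U) :
    pathEdges G x y = pathEdges G y x := by
  ext e
  constructor <;> rintro ⟨he, hp⟩ <;>
    exact ⟨he, fun p => by simpa using hp p.reverse⟩

variable (G) in
lemma pairPathEdges_mk (x y : U) :
    pairPathEdges G s(x, y) = pathEdges G x y := by
  ext e
  refine ⟨fun ⟨he, hp⟩ => ⟨he, hp x y rfl⟩, fun hxy => ⟨hxy.1, fun x' y' h p => ?_⟩⟩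
  rcases Sym2.eq_iff.1 h with ⟨rfl, rfl⟩ | ⟨rfl, rfl⟩
  · exact hxy.2 p
  · exact (pathEdges_comm G x y ▸ hxy).2 p

variable (G) in
lemma pdist_mk (ω : Sym2 U → ℝ) (x y : U) :
    pdist G ω s(x, y) = tdist G ω x y := by
  rw [pdist, tdist, pairPathEdges_mk]

lemma lIso_self_iff (L : Set (Sym2 U)) (ω ω' : Sym2 U → ℝ) :
    LIso L G ω G ω' ↔ ∀ c ∈ L, pdist G ω c = pdist G ω' c := by
  refine ⟨fun h c hc => ?_, fun h x y hxy => by simpa only [pdist_mk] using h _ hxy⟩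
  induction c using Sym2.ind with
  | _ x y => simpa only [pdist_mk] using h x y hc

lemma isProperWeighting_extend {w : G.edgeSet → ℝ} (hw : ∀ e, 0 < w e) :
    IsProperWeighting G (Function.extend Subtype.val w 0) := by
  have hpos : ∀ e ∈ G.edgeSet, 0 < Function.extend Subtype.val w 0 e := fun e he =>
    Subtype.val_injective.extend_apply w 0 ⟨e, he⟩ ▸ hw ⟨e, he⟩
  have hzero : ∀ e ∉ G.edgeSet, Function.extend Subtype.val w 0 e = 0 := fun e he =>
    Function.extend_apply' _ _ _ fun ⟨a, ha⟩ => he (ha ▸ a.2)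
  refine ⟨⟨fun e => ?_, hzero⟩, fun e he _ => hpos e he⟩
  by_cases he : e ∈ G.edgeSet
  · exact (hpos e he).le
  · exact (hzero e he).ge

lemma extend_restrict_eq {ω : Sym2 U → ℝ} (hω : ∀ e ∉ G.edgeSet, ω e = 0) :
    Function.extend Subtype.val (fun e : G.edgeSet => ω e) 0 = ω := by
  funext e
  by_cases he : e ∈ G.edgeSet
  · exact Subtype.val_injective.extend_apply _ _ ⟨e, he⟩
  · rw [Function.extend_apply' _ _ _ fun ⟨a, ha⟩ => he (ha ▸ a.2), hω e he, Pi.zero_apply]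

section FiniteEdgeSet

variable [Finite G.edgeSet]

lemma pairPathEdges_finite (c : Sym2 U) : (pairPathEdges G c).Finite :=
  (Set.toFinite G.edgeSet).subset fun _ h => h.1

variable (G) in
def pdistLinear (c : Sym2 U) : (Sym2 U → ℝ) →ₗ[ℝ] ℝ where
  toFun ω := pdist G ω c
  map_add' _ _ := finsum_mem_add_distrib (pairPathEdges_finite c)
  map_smul' r ω := (smul_finsum_mem (r := r) (f := ω) (pairPathEdges_finite c)).symm

variable (G) in
def cordFunctional (c : Sym2 U) : Module.Dual ℝ (G.edgeSet → ℝ) :=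
  (pdistLinear G c).comp (Function.ExtendByZero.linearMap ℝ Subtype.val)

lemma cordFunctional_apply (c : Sym2 U) (w : G.edgeSet → ℝ) :
    cordFunctional G c w = pdist G (Function.extend Subtype.val w 0) c := rfl

/-- With `C ≥ |v|`, `v = (C + 1 + v) - (C + 1)` is a difference of two positive weightings
that have the same cord lengths. -/
lemma EdgeWeightLasso.eq_zero_of_cordFunctional {L : Set (Sym2 U)} (hL : EdgeWeightLasso G L)
    {v : G.edgeSet → ℝ} (hv : ∀ c ∈ L, cordFunctional G c v = 0) : v = 0 := by
  obtain ⟨C, hC⟩ := (Set.finite_range fun e => |v e|).bddAbove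
  have hbound : ∀ e, |v e| ≤ C := fun e => hC ⟨e, rfl⟩
  let w : G.edgeSet → ℝ := fun _ => C + 1
  have hw : ∀ e, 0 < w e := fun e => by linarith [abs_nonneg (v e), hbound e]
  have hwv : ∀ e, 0 < (w + v) e := fun e => by
    linarith [neg_abs_le (v e), hbound e, show (w + v) e = C + 1 + v e from rfl]
  have hiso : LIso L G (Function.extend Subtype.val (w + v) 0) G
      (Function.extend Subtype.val w 0) := by
    refine (lIso_self_iff L _ _).2 fun c hc => ?_
    rw [← cordFunctional_apply, ← cordFunctional_apply, map_add, hv c hc, add_zero]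
  have hext := hL _ _ (isProperWeighting_extend hwv) (isProperWeighting_extend hw) hiso
  simpa using Function.extend_injective Subtype.val_injective (0 : Sym2 U → ℝ) hext

lemma edgeWeightLasso_of_cordFunctional {L : Set (Sym2 U)}
    (hL : ∀ v : G.edgeSet → ℝ, (∀ c ∈ L, cordFunctional G c v = 0) → v = 0) :
    EdgeWeightLasso G L := by
  intro ω ω' hω hω' hiso
  have hsupp : ∀ e ∉ G.edgeSet, (ω - ω') e = 0 := fun e he => by
    simp [hω.zero_off e he, hω'.zero_off e he]
  have hdiff : (fun e : G.edgeSet => (ω - ω') e) = 0 := hL _ fun c hc => by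
    rw [cordFunctional_apply, extend_restrict_eq hsupp]
    exact (map_sub (pdistLinear G c) ω ω').trans
      (sub_eq_zero.2 ((lIso_self_iff L ω ω').1 hiso c hc))
  rw [← sub_eq_zero, ← extend_restrict_eq hsupp, hdiff]
  exact map_zero (Function.ExtendByZero.linearMap ℝ Subtype.val)

theorem edgeWeightLasso_iff_span_cordFunctional_eq_top (L : Set (Sym2 U)) :
    EdgeWeightLasso G L ↔ Submodule.span ℝ (cordFunctional G '' L) = ⊤ := by
  rw [span_image_eq_top_iff_forall_apply_eq_zero]
  exact ⟨fun h _ => h.eq_zero_of_cordFunctional, edgeWeightLasso_of_cordFunctional⟩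

lemma finrank_dual_edgeSet_fun :
    Module.finrank ℝ (Module.Dual ℝ (G.edgeSet → ℝ)) = G.edgeSet.ncard := by
  rw [Subspace.dual_finrank_eq, Module.finrank_eq_nat_card_basis (Pi.basisFun ℝ G.edgeSet),
    Nat.card_coe_set_eq]

theorem EdgeWeightLasso.exists_subset_ncard_eq {L : Set (Sym2 U)} (hL : EdgeWeightLasso G L) :
    ∃ L₀ ⊆ L, EdgeWeightLasso G L₀ ∧ L₀.ncard = G.edgeSet.ncard := by
  rw [edgeWeightLasso_iff_span_cordFunctional_eq_top] at hL
  obtain ⟨L₀, hL₀L, hspan, hcard⟩ := exists_subset_span_image_eq_top_ncard_eq_finrank _ _ hL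
  exact ⟨L₀, hL₀L, (edgeWeightLasso_iff_span_cordFunctional_eq_top L₀).2 hspan,
    hcard.trans finrank_dual_edgeSet_fun⟩

end FiniteEdgeSet

theorem edgeWeightLasso_card_ge_and_minimal_card_eq_general {U : Type}
    (X : Set U) (G : SimpleGraph U)
    (hXfin : X.Finite) (hT : IsXTree X G)
    (L : Set (Sym2 U)) (hL : IsCordSet X L)
    (hlasso : EdgeWeightLasso G L) :
    G.edgeSet.ncard ≤ L.ncard ∧
      ((∀ L' : Set (Sym2 U), L' ⊂ L → ¬ EdgeWeightLasso G L') →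
        L.ncard = G.edgeSet.ncard) := by
  have : Finite G.edgeSet := hT.finite_edgeSet.to_subtype
  obtain ⟨L₀, hL₀L, hL₀, hcard⟩ := hlasso.exists_subset_ncard_eq
  refine ⟨hcard ▸ Set.ncard_le_ncard hL₀L (hL.finite hXfin), fun hmin => ?_⟩
  obtain rfl : L₀ = L := hL₀L.eq_of_not_ssubset fun hssub => hmin L₀ hssub hL₀
  exact hcard

/-- If `L` is an edge-weight lasso for the `X`-tree `T = (V,E)` then
`|L| ≥ |E|`, and if moreover `L` is a minimal edge-weight lasso for `T`
then `|L| = |E|`. -/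
theorem edgeWeightLasso_card_ge_and_minimal_card_eq {U : Type}
    (X : Set U) (G : SimpleGraph U)
    (hXfin : X.Finite) (hX3 : 3 ≤ X.ncard) (hT : IsXTree X G)
    (L : Set (Sym2 U)) (hL : IsCordSet X L)
    (hlasso : EdgeWeightLasso G L) :
    G.edgeSet.ncard ≤ L.ncard ∧
      ((∀ L' : Set (Sym2 U), L' ⊂ L → ¬ EdgeWeightLasso G L') →
        L.ncard = G.edgeSet.ncard) :=
  edgeWeightLasso_card_ge_and_minimal_card_eq_general X G hXfin hT L hL hlasso

end Lasso
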